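/- arXiv:cs/0512091 — 2 statements merged into one kernel-verified Lean document; each statement's English description precedes it below -/
import Mathlib

section
/- Let A, B, C be real numbers with A > 0, B > 0, C > 0 and A + B + 1 ≤ C. Then log₂(A/(B+C+1)) + log₂(B/C) − log₂(A/B) − log₂((A+B+1)/C) < −1. (Equivalently, log₂(B/(A+B+1)) + log₂(B/(B+C+1)) < −1.) -/
/-! The potential change equals `log₂ (B / (A + B + 1)) + log₂ (B / (B + C + 1))`.
The first ratio is below `1`, and lightness gives `B < C + 1`, so the second ratio is below `1/2`. -/

namespace Real

theorem logb_div_add_logb_div_sub_logb_div_sub_logb_div {b a x y z w : ℝ} (ha : a ≠ 0)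
    (hx : x ≠ 0) (hy : y ≠ 0) (hz : z ≠ 0) (hw : w ≠ 0) :
    logb b (a / x) + logb b (y / z) - logb b (a / y) - logb b (w / z) =
      logb b (y / w) + logb b (y / x) := by
  simp only [logb_div ha hx, logb_div hy hz, logb_div ha hy, logb_div hw hz, logb_div hy hw,
    logb_div hy hx]
  ring

theorem logb_two_div_lt_neg_one {a b : ℝ} (ha : 0 < a) (hab : 2 * a < b) :
    logb 2 (a / b) < -1 := by
  have hb : 0 < b := by linarith
  rw [logb_lt_iff_lt_rpow one_lt_two (div_pos ha hb), rpow_neg_one, div_lt_iff₀ hb,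
    inv_mul_eq_div, lt_div_iff₀ two_pos]
  linarith

end Real

theorem zig_potential_drop_general (A B C : ℝ) (hA : 0 < A) (hB : 0 < B)
    (hlight : A + B + 1 ≤ C) :
    Real.logb 2 (A / (B + C + 1)) + Real.logb 2 (B / C)
      - Real.logb 2 (A / B) - Real.logb 2 ((A + B + 1) / C) < -1 ∧
    Real.logb 2 (B / (A + B + 1)) + Real.logb 2 (B / (B + C + 1)) < -1 := by
  have hAB1 : 0 < A + B + 1 := by linarith
  have hC : 0 < C := by linarith
  have hBC1 : 0 < B + C + 1 := by linarith
  have drop : Real.logb 2 (B / (A + B + 1)) + Real.logb 2 (B / (B + C + 1)) < -1 := by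
    have first : Real.logb 2 (B / (A + B + 1)) < 0 :=
      Real.logb_neg one_lt_two (div_pos hB hAB1) ((div_lt_one hAB1).2 (by linarith))
    have second : Real.logb 2 (B / (B + C + 1)) < -1 :=
      Real.logb_two_div_lt_neg_one hB (by linarith)
    linarith
  refine ⟨?_, drop⟩
  rwa [Real.logb_div_add_logb_div_sub_logb_div_sub_logb_div hA.ne' hBC1.ne' hB.ne' hC.ne'
    hAB1.ne']

/-- The potential change of a "zig" step in the flarb analysis:
if `A`, `B`, `C` are positive reals with `A + B + 1 ≤ C` (the edge is light), then
`log₂(A/(B+C+1)) + log₂(B/C) − log₂(A/B) − log₂((A+B+1)/C) < −1`, equivalently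
`log₂(B/(A+B+1)) + log₂(B/(B+C+1)) < −1`. -/
theorem zig_potential_drop (A B C : ℝ) (hA : 0 < A) (hB : 0 < B) (hC : 0 < C)
    (hlight : A + B + 1 ≤ C) :
    Real.logb 2 (A / (B + C + 1)) + Real.logb 2 (B / C)
      - Real.logb 2 (A / B) - Real.logb 2 ((A + B + 1) / C) < -1 ∧
    Real.logb 2 (B / (A + B + 1)) + Real.logb 2 (B / (B + C + 1)) < -1 :=
  zig_potential_drop_general A B C hA hB hlight
end

section
/- Let C, D, E, F be positive real numbers, let k be a natural number, and let B₁, …, B_k be positive real numbers with S = B₁ + ⋯ + B_k. Then log₂(C/(D+E+F+2)) + log₂(D/(E+F+1)) + log₂(E/F) − log₂((S+C+D+E+k+2)/F) − log₂((C+D+1)/E) − log₂(C/D) < −1. Equivalently, D²·E² / ((D+E+F+2)·(E+F+1)·(S+C+D+E+k+2)·(C+D+1)) < 1/2. -/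
/-!
The six logarithms combine into `log₂` of the single ratio
`D²E² / ((D+E+F+2)(E+F+1)(S+C+D+E+k+2)(C+D+1))`, so it suffices to bound that ratio by `1/2`.
Shrinking the denominator to `(D+E+2)²(D+1)(E+1)` only increases the ratio, and then
AM-GM (`4DE ≤ (D+E+2)²`) together with `DE < (D+1)(E+1)` leaves even a factor `2` to spare.
-/

open Real

theorem two_mul_sq_mul_sq_lt {x y : ℝ} (hx : 0 ≤ x) (hy : 0 ≤ y) :
    2 * (x ^ 2 * y ^ 2) < (x + y + 2) ^ 2 * ((x + 1) * (y + 1)) := by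
  have hxy : 0 ≤ x * y := mul_nonneg hx hy
  have amgm : 4 * (x * y) ≤ (x + y + 2) ^ 2 := by nlinarith [sq_nonneg (x - y)]
  calc 2 * (x ^ 2 * y ^ 2) ≤ 4 * (x * y) * (x * y) := by nlinarith
    _ ≤ (x + y + 2) ^ 2 * (x * y) := by gcongr
    _ < (x + y + 2) ^ 2 * ((x + 1) * (y + 1)) := by gcongr <;> nlinarith

theorem sq_mul_sq_div_lt_half {x y a b c d : ℝ} (hx : 0 ≤ x) (hy : 0 ≤ y)
    (ha : x + y + 2 ≤ a) (hb : y + 1 ≤ b) (hc : x + y + 2 ≤ c) (hd : x + 1 ≤ d) :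
    x ^ 2 * y ^ 2 / (a * b * c * d) < 1 / 2 := by
  have ha0 : 0 < a := by linarith
  have hb0 : 0 < b := by linarith
  have hc0 : 0 < c := by linarith
  have hd0 : 0 < d := by linarith
  have hmono : (x + y + 2) ^ 2 * ((x + 1) * (y + 1)) ≤ a * b * c * d := by
    calc (x + y + 2) ^ 2 * ((x + 1) * (y + 1))
        = (x + y + 2) * (y + 1) * (x + y + 2) * (x + 1) := by ring
      _ ≤ a * b * c * d := by gcongr
  rw [div_lt_iff₀ (by positivity)]
  linarith [two_mul_sq_mul_sq_lt hx hy]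

theorem logb_zag_eq {C D E F a b c d : ℝ} (hC : 0 < C) (hD : 0 < D) (hE : 0 < E) (hF : 0 < F)
    (ha : 0 < a) (hb : 0 < b) (hc : 0 < c) (hd : 0 < d) :
    logb 2 (C / a) + logb 2 (D / b) + logb 2 (E / F) - logb 2 (c / F) - logb 2 (d / E)
      - logb 2 (C / D) = logb 2 (D ^ 2 * E ^ 2 / (a * b * c * d)) := by
  rw [← logb_mul (by positivity) (by positivity), ← logb_mul (by positivity) (by positivity),
    ← logb_div (by positivity) (by positivity), ← logb_div (by positivity) (by positivity),
    ← logb_div (by positivity) (by positivity)]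
  congr 1
  field_simp

theorem logb_two_lt_neg_one {x : ℝ} (hx : 0 < x) (hx2 : x < 1 / 2) : logb 2 x < -1 := by
  rw [logb_lt_iff_lt_rpow one_lt_two hx, rpow_neg_one]
  linarith

open Finset in
/-- The potential change of a "zag" step in the flarb analysis:
for positive reals `C, D, E, F` and positive reals `B₁, …, B_k` with sum `S`,
`log₂(C/(D+E+F+2)) + log₂(D/(E+F+1)) + log₂(E/F) − log₂((S+C+D+E+k+2)/F)
 − log₂((C+D+1)/E) − log₂(C/D) < −1`, equivalently
`D²·E² / ((D+E+F+2)·(E+F+1)·(S+C+D+E+k+2)·(C+D+1)) < 1/2`. -/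
theorem zag_potential_drop (C D E F : ℝ) (hC : 0 < C) (hD : 0 < D) (hE : 0 < E) (hF : 0 < F)
    (k : ℕ) (B : Fin k → ℝ) (hB : ∀ i, 0 < B i) (S : ℝ) (hS : S = ∑ i, B i) :
    Real.logb 2 (C / (D + E + F + 2)) + Real.logb 2 (D / (E + F + 1)) + Real.logb 2 (E / F)
      - Real.logb 2 ((S + C + D + E + k + 2) / F)
      - Real.logb 2 ((C + D + 1) / E) - Real.logb 2 (C / D) < -1 ∧
    D ^ 2 * E ^ 2 /
      ((D + E + F + 2) * (E + F + 1) * (S + C + D + E + k + 2) * (C + D + 1)) < 1 / 2 := by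
  have hS0 : 0 ≤ S := hS ▸ sum_nonneg fun i _ => (hB i).le
  have hk : (0 : ℝ) ≤ k := k.cast_nonneg
  have hratio : D ^ 2 * E ^ 2 /
      ((D + E + F + 2) * (E + F + 1) * (S + C + D + E + k + 2) * (C + D + 1)) < 1 / 2 :=
    sq_mul_sq_div_lt_half hD.le hE.le (by linarith) (by linarith) (by linarith) (by linarith)
  refine ⟨?_, hratio⟩
  rw [logb_zag_eq hC hD hE hF (by positivity) (by positivity) (by positivity) (by positivity)]
  exact logb_two_lt_neg_one (by positivity) hratio
end
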